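/- Let x and y be elements of a ring R with identity, and ω ∈ R such that ωx = xω, ωy = yω, and xy = ωyx. Then for every nonnegative integer q, (x + y)^q = ∑_{k=0}^q c_k y^k x^{q-k}, where the coefficients c_k are the Gaussian (q-)binomial coefficients in ω, i.e. they satisfy φ_k φ_{q-k} c_k = φ_q with φ_k = ∏_{s=1}^k (1 + ω + ⋯ + ω^{s-1}) whenever these are invertible (equivalently, c_k is the Gaussian binomial coefficient evaluated at ω). -/

import Mathlib

/-!
Both statements come from the q-Pascal recursion defining `qBinom`. Since `x * y ^ k = ω ^ k * y ^ k * x`,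
left multiplication by `x` carries the weight `ω ^ k` that appears in the recursion, so the expansion of
`(x + y) ^ (q + 1) = x * (x + y) ^ q + y * (x + y) ^ q` follows by induction on `q`.
The factorial identity is a polynomial identity in `ω`: over a commutative ring it follows by induction
from the recursion and the splitting `[k + m + 2] = [k + 1] + ω ^ (k + 1) * [m + 1]` of q-integers
`[s] = 1 + ω + ⋯ + ω ^ (s - 1)`, and it is transported to `R` by evaluating `ℤ[X]` at `ω`.
-/

/-- The Gaussian (q-)binomial coefficient `[n choose k]_ω` in a ring,
defined via the q-Pascal recursion
`[n+1 choose k+1]_ω = [n choose k]_ω + ω^(k+1) * [n choose k+1]_ω`. -/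
def qBinom {R : Type*} [Ring R] (ω : R) : ℕ → ℕ → R
  | _, 0 => 1
  | 0, _ + 1 => 0
  | n + 1, k + 1 => qBinom ω n k + ω ^ (k + 1) * qBinom ω n (k + 1)

/-- `φ_k = ∏_{s=1}^k (1 + ω + ⋯ + ω^(s-1))`. -/
def qPhi {R : Type*} [Ring R] (ω : R) (k : ℕ) : R :=
  ((List.range k).map (fun s => ∑ i ∈ Finset.range (s + 1), ω ^ i)).prod

open Finset Polynomial

section QBinom

variable {R : Type*} [Ring R] (ω : R)

@[simp] lemma qBinom_zero_right (n : ℕ) : qBinom ω n 0 = 1 := by cases n <;> rfl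

lemma qBinom_succ_succ (n k : ℕ) :
    qBinom ω (n + 1) (k + 1) = qBinom ω n k + ω ^ (k + 1) * qBinom ω n (k + 1) := rfl

lemma qBinom_of_lt : ∀ {n k : ℕ}, n < k → qBinom ω n k = 0
  | 0, _ + 1, _ => rfl
  | n + 1, k + 1, h => by
    rw [qBinom_succ_succ, qBinom_of_lt (by omega : n < k), qBinom_of_lt (by omega : n < k + 1),
      mul_zero, add_zero]

@[simp] lemma qBinom_self : ∀ n : ℕ, qBinom ω n n = 1
  | 0 => rfl
  | n + 1 => by
    rw [qBinom_succ_succ, qBinom_self n, qBinom_of_lt ω n.lt_succ_self, mul_zero, add_zero]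

@[simp] lemma qPhi_zero : qPhi ω 0 = 1 := rfl

lemma qPhi_succ (k : ℕ) : qPhi ω (k + 1) = qPhi ω k * ∑ i ∈ range (k + 1), ω ^ i := by
  simp [qPhi, List.range_succ]

variable {ω}

lemma Commute.qBinom_right {a : R} (h : Commute a ω) : ∀ n k : ℕ, Commute a (qBinom ω n k)
  | _, 0 => by simp
  | 0, _ + 1 => by simp [qBinom]
  | n + 1, k + 1 => by
    rw [qBinom_succ_succ]
    exact (h.qBinom_right n k).add_right ((h.pow_right _).mul_right (h.qBinom_right n (k + 1)))

variable {S F : Type*} [Ring S] [FunLike F R S] [RingHomClass F R S]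

lemma map_qBinom (f : F) (ω : R) : ∀ n k : ℕ, f (qBinom ω n k) = qBinom (f ω) n k
  | _, 0 => by simp
  | 0, _ + 1 => by simp [qBinom]
  | n + 1, k + 1 => by
    rw [qBinom_succ_succ, qBinom_succ_succ, map_add, map_mul, map_pow, map_qBinom f ω n k,
      map_qBinom f ω n (k + 1)]

lemma map_qPhi (f : F) (ω : R) (k : ℕ) : f (qPhi ω k) = qPhi (f ω) k := by
  simp [qPhi, map_list_prod, Function.comp_def]

end QBinom

section Factorial

lemma geom_sum_range_add {R : Type*} [Semiring R] (ω : R) (k m : ℕ) :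
    ∑ i ∈ range (k + m), ω ^ i = ∑ i ∈ range k, ω ^ i + ω ^ k * ∑ i ∈ range m, ω ^ i := by
  simp [sum_range_add, mul_sum, pow_add]

lemma qPhi_mul_qPhi_mul_qBinom_add {R : Type*} [CommRing R] (ω : R) :
    ∀ k m : ℕ, qPhi ω k * qPhi ω m * qBinom ω (k + m) k = qPhi ω (k + m)
  | 0, m => by simp
  | k + 1, 0 => by simp
  | k + 1, m + 1 => by
    have ih₁ := qPhi_mul_qPhi_mul_qBinom_add ω k (m + 1)
    have ih₂ := qPhi_mul_qPhi_mul_qBinom_add ω (k + 1) m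
    rw [← add_assoc] at ih₁
    rw [add_right_comm] at ih₂
    have hsplit := geom_sum_range_add ω (k + 1) (m + 1)
    rw [show k + 1 + (m + 1) = k + m + 1 + 1 by omega] at hsplit ⊢
    rw [qBinom_succ_succ, qPhi_succ ω (k + m + 1), hsplit]
    simp only [qPhi_succ ω k, qPhi_succ ω m] at ih₁ ih₂ ⊢
    linear_combination (∑ i ∈ range (k + 1), ω ^ i) * ih₁
      + ω ^ (k + 1) * (∑ i ∈ range (m + 1), ω ^ i) * ih₂

lemma qPhi_mul_qPhi_mul_qBinom {R : Type*} [Ring R] (ω : R) {n k : ℕ} (hk : k ≤ n) :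
    qPhi ω k * qPhi ω (n - k) * qBinom ω n k = qPhi ω n := by
  obtain ⟨m, rfl⟩ := Nat.exists_eq_add_of_le hk
  simpa [Nat.add_sub_cancel_left, map_qPhi, map_qBinom] using
    congrArg (aeval ω) (qPhi_mul_qPhi_mul_qBinom_add (X : ℤ[X]) k m)

end Factorial

section Expansion

variable {R : Type*} [Ring R] {ω x y : R}

lemma mul_pow_eq_pow_mul_pow_mul (hωy : Commute ω y) (hxy : x * y = ω * (y * x)) :
    ∀ k : ℕ, x * y ^ k = ω ^ k * (y ^ k * x)
  | 0 => by simp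
  | k + 1 =>
    calc x * y ^ (k + 1) = ω ^ k * (y ^ k * (x * y)) := by
          rw [pow_succ, ← mul_assoc, mul_pow_eq_pow_mul_pow_mul hωy hxy k, mul_assoc, mul_assoc]
      _ = ω ^ k * (ω * y ^ k) * (y * x) := by
          rw [hxy, ← mul_assoc (y ^ k), ← (hωy.pow_right k).eq]
          simp only [mul_assoc]
      _ = ω ^ (k + 1) * (y ^ (k + 1) * x) := by simp only [pow_succ, mul_assoc]

lemma mul_qBinom_mul_pow_mul_pow (hωx : Commute ω x) (hωy : Commute ω y)
    (hxy : x * y = ω * (y * x)) (n k m : ℕ) :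
    x * (qBinom ω n k * y ^ k * x ^ m) = ω ^ k * qBinom ω n k * y ^ k * x ^ (m + 1) := by
  have hωc : Commute ω (qBinom ω n k) := (Commute.refl ω).qBinom_right n k
  calc x * (qBinom ω n k * y ^ k * x ^ m) = qBinom ω n k * (x * y ^ k) * x ^ m := by
        simp only [← mul_assoc, (hωx.symm.qBinom_right n k).eq]
    _ = ω ^ k * qBinom ω n k * y ^ k * x ^ (m + 1) := by
        rw [mul_pow_eq_pow_mul_pow_mul hωy hxy, ← mul_assoc, ← (hωc.pow_left k).eq, pow_succ']
        simp only [mul_assoc]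

lemma mul_sum_qBinom_mul_pow_mul_pow (hωx : Commute ω x) (hωy : Commute ω y)
    (hxy : x * y = ω * (y * x)) (q : ℕ) :
    x * ∑ k ∈ range (q + 1), qBinom ω q k * y ^ k * x ^ (q - k) =
      x ^ (q + 1) +
        ∑ k ∈ range (q + 1), ω ^ (k + 1) * qBinom ω q (k + 1) * y ^ (k + 1) * x ^ (q - k) := by
  rw [mul_sum, sum_range_succ', add_comm, sum_range_succ _ q, qBinom_of_lt ω q.lt_succ_self]
  simp only [mul_qBinom_mul_pow_mul_pow hωx hωy hxy]
  congr 1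
  · simp
  · simp only [mul_zero, zero_mul, add_zero]
    refine sum_congr rfl fun k hk => ?_
    rw [show q - (k + 1) + 1 = q - k by simp at hk; omega]

lemma add_pow_eq_sum_qBinom (hωx : Commute ω x) (hωy : Commute ω y)
    (hxy : x * y = ω * (y * x)) :
    ∀ q : ℕ, (x + y) ^ q = ∑ k ∈ range (q + 1), qBinom ω q k * y ^ k * x ^ (q - k)
  | 0 => by simp
  | q + 1 => by
    have y_mul_sum : y * ∑ k ∈ range (q + 1), qBinom ω q k * y ^ k * x ^ (q - k) =
        ∑ k ∈ range (q + 1), qBinom ω q k * y ^ (k + 1) * x ^ (q - k) := by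
      simp only [mul_sum, ← mul_assoc, (hωy.symm.qBinom_right q _).eq]
      simp only [mul_assoc, ← pow_succ']
    rw [pow_succ', add_mul, add_pow_eq_sum_qBinom hωx hωy hxy q,
      mul_sum_qBinom_mul_pow_mul_pow hωx hωy hxy, y_mul_sum, sum_range_succ' _ (q + 1)]
    simp only [qBinom_succ_succ, add_mul, sum_add_distrib, Nat.add_sub_add_right,
      qBinom_zero_right, pow_zero, one_mul, mul_one, Nat.sub_zero, mul_assoc]
    abel

end Expansion

theorem potter_schuetzenberger {R : Type*} [Ring R] (ω x y : R)
    (hx : ω * x = x * ω) (hy : ω * y = y * ω) (hxy : x * y = ω * (y * x)) (q : ℕ) :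
    (x + y) ^ q = ∑ k ∈ Finset.range (q + 1), qBinom ω q k * y ^ k * x ^ (q - k) ∧
    ∀ k ≤ q, qPhi ω k * qPhi ω (q - k) * qBinom ω q k = qPhi ω q :=
  ⟨add_pow_eq_sum_qBinom hx hy hxy q, fun _ hk => qPhi_mul_qPhi_mul_qBinom ω hk⟩
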